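/- Let U be a Beta(a, b) random variable and W an independent Gamma(a+b, β) random variable (shape a+b, rate β), with a, b, β > 0. Then the product Y = W·U has a Gamma(a, β) distribution. -/

import Mathlib

/-!
By independence, the law of `W * U` is the multiplicative convolution of the two laws.
Conditionally on `W = w > 0`, the product `W * U` has density `w⁻¹ · beta(y / w)`, so the
density of `W * U` at `y ≠ 0` is `∫ gamma_{a+b}(w) w⁻¹ beta(y / w) dw`. The Beta–Gamma
algebra makes the integrand factor as `gamma_a(y) · gamma_b(w - y)`: the normalising constants
`Γ(a+b)` cancel, the powers of `w` collapse to `y^(a-1) (w-y)^(b-1)`, and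
`e^{-βw} = e^{-βy} e^{-β(w-y)}`. Integrating out `w` leaves `gamma_a(y)`.
-/

open MeasureTheory ProbabilityTheory

/-- The density of the Beta(a, b) distribution on (0,1). -/
noncomputable def betaPDFReal (a b u : ℝ) : ℝ :=
  if 0 < u ∧ u < 1 then
    Real.Gamma (a + b) / (Real.Gamma a * Real.Gamma b) * u ^ (a - 1) * (1 - u) ^ (b - 1)
  else 0

/-- The Beta(a, b) measure on ℝ. -/
noncomputable def betaMeasure (a b : ℝ) : Measure ℝ :=
  volume.withDensity fun u => ENNReal.ofReal (_root_.betaPDFReal a b u)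

open scoped ENNReal

theorem Real.lintegral_comp_mul_left (F : ℝ → ℝ≥0∞) {c : ℝ} (hc : c ≠ 0) :
    ∫⁻ y, F (c * y) = ENNReal.ofReal |c⁻¹| * ∫⁻ z, F z := by
  calc ∫⁻ y, F (c * y) = ∫⁻ z, F z ∂(volume.map (c * ·)) :=
        (lintegral_map_equiv F (MeasurableEquiv.mulLeft₀ c hc)).symm
    _ = _ := by rw [Real.map_volume_mul_left hc, lintegral_smul_measure, smul_eq_mul]

theorem Real.withDensity_mconv_withDensity {f g : ℝ → ℝ≥0∞} (hf : Measurable f)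
    (hg : Measurable g) :
    volume.withDensity f ∗ₘ volume.withDensity g =
      volume.withDensity fun z ↦ ∫⁻ x, f x * ENNReal.ofReal |x⁻¹| * g (z / x) := by
  ext s hs
  have h1s : Measurable (s.indicator (1 : ℝ → ℝ≥0∞)) := measurable_one.indicator hs
  have hslice : ∀ᵐ x : ℝ, ∫⁻ y, g y * s.indicator 1 (x * y) =
      ENNReal.ofReal |x⁻¹| * ∫⁻ z, g (z / x) * s.indicator 1 z := by
    filter_upwards [Measure.ae_ne volume 0] with x hx
    rw [← Real.lintegral_comp_mul_left _ hx]
    simp_rw [mul_div_cancel_left₀ _ hx]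
  calc (volume.withDensity f ∗ₘ volume.withDensity g) s
      = ∫⁻ x, f x * ∫⁻ y, g y * s.indicator 1 (x * y) := by
        rw [← lintegral_indicator_one hs, Measure.lintegral_mconv h1s,
          lintegral_withDensity_eq_lintegral_mul _ hf]
        · refine lintegral_congr fun x ↦ congrArg (f x * ·) ?_
          exact lintegral_withDensity_eq_lintegral_mul _ hg (h1s.comp (measurable_const_mul x))
        · exact (h1s.comp measurable_mul).lintegral_prod_right'
    _ = ∫⁻ x, ∫⁻ z, f x * ENNReal.ofReal |x⁻¹| * g (z / x) * s.indicator 1 z := by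
        refine lintegral_congr_ae ?_
        filter_upwards [hslice] with x hx
        rw [hx, ← mul_assoc, ← lintegral_const_mul _ (by fun_prop)]
        simp_rw [mul_assoc]
    _ = ∫⁻ z in s, ∫⁻ x, f x * ENNReal.ofReal |x⁻¹| * g (z / x) := by
        rw [lintegral_lintegral_swap (by fun_prop), ← lintegral_indicator hs]
        refine lintegral_congr fun z ↦ ?_
        rw [lintegral_mul_const _ (by fun_prop)]
        by_cases hz : z ∈ s <;> simp [hz]
    _ = _ := (withDensity_apply _ hs).symm

theorem betaMeasure_eq_probabilityTheory_betaMeasure (a b : ℝ) :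
    _root_.betaMeasure a b = ProbabilityTheory.betaMeasure a b := by
  rw [_root_.betaMeasure, ProbabilityTheory.betaMeasure]
  congr with u
  simp only [betaPDF, _root_.betaPDFReal, ProbabilityTheory.betaPDFReal, beta, one_div_div]

namespace ProbabilityTheory

theorem gammaPDFReal_of_neg {a r x : ℝ} (hx : x < 0) : gammaPDFReal a r x = 0 :=
  if_neg hx.not_ge

theorem gammaPDFReal_add_mul_betaPDFReal_div {a b β y w : ℝ} (ha : 0 < a) (hb : 0 < b)
    (hβ : 0 < β) (hy : y ≠ 0) (hwy : w ≠ y) :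
    gammaPDFReal (a + b) β w * |w⁻¹| * betaPDFReal a b (y / w) =
      gammaPDFReal a β y * gammaPDFReal b β (w - y) := by
  by_cases h : 0 < y ∧ y < w
  · obtain ⟨hy, hyw⟩ := h
    have hw : 0 < w := hy.trans hyw
    have hyw' : 0 < y / w ∧ y / w < 1 := ⟨div_pos hy hw, (div_lt_one hw).2 hyw⟩
    rw [gammaPDFReal, gammaPDFReal, gammaPDFReal, betaPDFReal, beta, if_pos hw.le,
      if_pos hy.le, if_pos (sub_nonneg.2 hyw.le), if_pos hyw', abs_of_pos (inv_pos.2 hw),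
      one_sub_div hw.ne', Real.div_rpow hy.le hw.le, Real.div_rpow (sub_nonneg.2 hyw.le) hw.le,
      Real.rpow_add hβ, show a + b - 1 = (a - 1) + (b - 1) + 1 by ring,
      Real.rpow_add hw, Real.rpow_add hw, Real.rpow_one,
      show -(β * w) = -(β * y) + -(β * (w - y)) by ring, Real.exp_add]
    have := (Real.Gamma_pos_of_pos ha).ne'
    have := (Real.Gamma_pos_of_pos hb).ne'
    have := (Real.Gamma_pos_of_pos (add_pos ha hb)).ne'
    have := (Real.rpow_pos_of_pos hw (a - 1)).ne'
    have := (Real.rpow_pos_of_pos hw (b - 1)).ne'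
    field_simp
  · have hrhs : gammaPDFReal a β y * gammaPDFReal b β (w - y) = 0 := by
      rcases hy.lt_or_gt with hy | hy
      · rw [gammaPDFReal_of_neg hy, zero_mul]
      · have hwy : w < y := lt_of_le_of_ne (not_lt.1 fun hyw ↦ h ⟨hy, hyw⟩) hwy
        rw [gammaPDFReal_of_neg (sub_neg.2 hwy), mul_zero]
    rw [hrhs]
    rcases lt_trichotomy w 0 with hw | rfl | hw
    · rw [gammaPDFReal_of_neg hw, zero_mul, zero_mul]
    · rw [inv_zero, abs_zero, mul_zero, zero_mul]
    · have hbeta : betaPDFReal a b (y / w) = 0 :=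
        if_neg fun ⟨h0, h1⟩ ↦ h ⟨(div_pos_iff_of_pos_right hw).1 h0, (div_lt_one hw).1 h1⟩
      rw [hbeta, mul_zero]

theorem lintegral_gammaPDF_mul_betaPDF_div {a b β y : ℝ} (ha : 0 < a) (hb : 0 < b)
    (hβ : 0 < β) (hy : y ≠ 0) :
    ∫⁻ w, gammaPDF (a + b) β w * ENNReal.ofReal |w⁻¹| * betaPDF a b (y / w) = gammaPDF a β y := by
  calc _ = ∫⁻ w, gammaPDF a β y * gammaPDF b β (w - y) := by
        refine lintegral_congr_ae ?_
        filter_upwards [Measure.ae_ne volume y] with w hw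
        rw [gammaPDF, gammaPDF, gammaPDF, betaPDF,
          ← ENNReal.ofReal_mul (gammaPDFReal_nonneg (add_pos ha hb) hβ w),
          ← ENNReal.ofReal_mul (by positivity [gammaPDFReal_nonneg (add_pos ha hb) hβ w]),
          ← ENNReal.ofReal_mul (gammaPDFReal_nonneg ha hβ y),
          gammaPDFReal_add_mul_betaPDFReal_div ha hb hβ hy hw]
    _ = gammaPDF a β y * ∫⁻ w, gammaPDF b β w := by
        rw [lintegral_const_mul' (gammaPDF a β y) _ ENNReal.ofReal_ne_top,
          lintegral_sub_right_eq_self]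
    _ = gammaPDF a β y := by rw [lintegral_gammaPDF_eq_one hb hβ, mul_one]

end ProbabilityTheory

/-- If `U ~ Beta(a, b)` and `W ~ Gamma(a+b, β)` are independent, then
`Y = W * U ~ Gamma(a, β)`. -/
theorem mul_beta_gamma_is_gamma {Ω : Type*} [MeasurableSpace Ω]
    (μ : Measure Ω) [IsProbabilityMeasure μ]
    (a b β : ℝ) (ha : 0 < a) (hb : 0 < b) (hβ : 0 < β)
    (U W : Ω → ℝ) (hUm : Measurable U) (hWm : Measurable W)
    (hU : μ.map U = _root_.betaMeasure a b)
    (hW : μ.map W = gammaMeasure (a + b) β)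
    (hind : IndepFun U W μ) :
    μ.map (fun ω => W ω * U ω) = gammaMeasure a β := by
  have hWU : μ.map (fun ω => W ω * U ω) =
      gammaMeasure (a + b) β ∗ₘ ProbabilityTheory.betaMeasure a b := by
    rw [← betaMeasure_eq_probabilityTheory_betaMeasure, ← hU, ← hW]
    exact hind.symm.map_mul_eq_map_mconv_map hWm hUm
  rw [hWU, gammaMeasure, ProbabilityTheory.betaMeasure, gammaMeasure,
    Real.withDensity_mconv_withDensity (f := gammaPDF (a + b) β) (g := betaPDF a b)
      (measurable_gammaPDFReal _ _).ennreal_ofReal (measurable_betaPDFReal a b).ennreal_ofReal]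
  refine withDensity_congr_ae ?_
  filter_upwards [Measure.ae_ne volume 0] with y hy
  exact lintegral_gammaPDF_mul_betaPDF_div ha hb hβ hy
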